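/- Let R be a commutative Noetherian ring of Krull dimension 2, with finitely many maximal ideals all of height 2, and let Q ⊋ Q' ⊋ Q'' be a chain of primes. Let 𝓗 be the finite set consisting of the minimal primes of R together with the height-one primes dominating at least two minimal primes. Then there exist infinitely many height-one primes Q* with Q'' ⊂ Q* ⊂ Q such that Q is the unique prime strictly containing Q* and Q'' is the unique prime strictly contained in Q*. -/

import Mathlib

/-!
Since `R` has dimension two, the chain `q'' < q' < q` forces `q''` to be minimal, `q` to be
maximal of height two, and every prime strictly between them to have height one. If only finitely
many primes of the required kind existed, prime avoidance would give `x ∈ q` lying outside every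
other maximal ideal, every prime of the finite set `𝓗`, and every prime of the required kind.
A prime `p ⊆ q` minimal over `q'' + (x)` differs from `q` by Krull's principal ideal theorem in
`R ⧸ q''`, so it has height one. The primes above `p` are maximal and contain `x`, hence equal `q`;
a second minimal prime below `p` would put `p` into `𝓗`. So `p` is of the required kind, yet
contains `x`.
-/

namespace Ideal

variable {R : Type*} [CommRing R]

lemma map_quotientMk_lt_map {I J K : Ideal R} (hIJ : I ≤ J) (hJK : J < K) :
    J.map (Quotient.mk I) < K.map (Quotient.mk I) := by
  refine lt_of_le_of_ne (map_mono hJK.le) fun h ↦ hJK.ne ?_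
  simpa [comap_map_mk hIJ, comap_map_mk (hIJ.trans hJK.le)] using
    congrArg (comap (Quotient.mk I)) h

/-- Krull's principal ideal theorem, applied in `R ⧸ I`. -/
lemma not_lt_of_lt_of_mem_minimalPrimes_sup_span_singleton [IsNoetherianRing R]
    {I J K P : Ideal R} [J.IsPrime] [K.IsPrime] {x : R}
    (hP : P ∈ (I ⊔ span {x}).minimalPrimes) (hIJ : I ≤ J) (hJK : J < K) : ¬ K < P := by
  intro hKP
  have := hP.isPrime
  have := isPrime_map_quotientMk_of_isPrime (le_sup_left.trans hP.1.2)
  have := isPrime_map_quotientMk_of_isPrime hIJ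
  have := isPrime_map_quotientMk_of_isPrime (hIJ.trans hJK.le)
  have hJK' := height_add_one_le_of_lt_of_isPrime (map_quotientMk_lt_map hIJ hJK)
  have hKP' := height_add_one_le_of_lt_of_isPrime
    (map_quotientMk_lt_map (hIJ.trans hJK.le) hKP)
  have := map_height_le_one_of_mem_minimalPrimes hP
  generalize (J.map (Quotient.mk I)).height = j at *
  generalize (K.map (Quotient.mk I)).height = k at *
  generalize (P.map (Quotient.mk I)).height = p at *
  enat_to_nat
  omega

end Ideal

namespace PrimeSpectrum

variable {R : Type*} [CommRing R]

lemma exists_mem_between_of_notMem [IsNoetherianRing R] {a b c : PrimeSpectrum R} {x : R}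
    (hab : a < b) (hbc : b < c) (hxc : x ∈ c.asIdeal) (hxa : x ∉ a.asIdeal) :
    ∃ p : PrimeSpectrum R, a < p ∧ p < c ∧ x ∈ p.asIdeal := by
  have hle : a.asIdeal ⊔ Ideal.span {x} ≤ c.asIdeal :=
    sup_le (hab.trans hbc).le (Ideal.span_singleton_le_iff_mem _ |>.mpr hxc)
  obtain ⟨P, hP, hPc⟩ := Ideal.exists_minimalPrimes_le hle
  have hxP : x ∈ P := hP.1.2 (Ideal.mem_sup_right (Ideal.mem_span_singleton_self x))
  refine ⟨⟨P, hP.isPrime⟩, lt_of_le_of_ne (le_sup_left.trans hP.1.2) ?_, ?_, hxP⟩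
  · exact fun h ↦ hxa (by rw [h]; exact hxP)
  · refine lt_of_le_of_ne hPc ?_
    rintro rfl
    exact Ideal.not_lt_of_lt_of_mem_minimalPrimes_sup_span_singleton hP le_rfl hab hbc

lemma exists_mem_forall_notMem_of_finite {S : Set (PrimeSpectrum R)} (hS : S.Finite)
    (p : PrimeSpectrum R) (hp : ∀ r ∈ S, ¬ p ≤ r) :
    ∃ x ∈ p.asIdeal, ∀ r ∈ S, x ∉ r.asIdeal := by
  by_contra! h
  obtain ⟨r, hr, hpr⟩ := (Ideal.subset_union_prime_finite hS (f := asIdeal) p p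
    fun r _ _ _ ↦ r.isPrime).mp fun x hx ↦
      let ⟨r, hr, hxr⟩ := h x hx; Set.mem_biUnion hr hxr
  exact hp r hr hpr

end PrimeSpectrum

namespace Order

variable {α : Type*} [Preorder α]

lemma height_eq_zero_one_two_of_krullDim_le_two (hα : krullDim α ≤ 2) {a b c : α}
    (hab : a < b) (hbc : b < c) : height a = 0 ∧ height b = 1 ∧ height c = 2 := by
  have hab' := height_add_one_le hab
  have hbc' := height_add_one_le hbc
  have hc : height c ≤ 2 := WithBot.coe_le_coe.mp ((height_le_krullDim c).trans hα)
  generalize height a = i at *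
  generalize height b = j at *
  generalize height c = k at *
  enat_to_nat
  omega

lemma isMax_of_lt_of_lt_of_krullDim_le_two (hα : krullDim α ≤ 2) {a b c : α}
    (hab : a < b) (hbc : b < c) : IsMax c := by
  intro d hcd
  by_contra hdc
  have hb1 := (height_eq_zero_one_two_of_krullDim_le_two hα hab hbc).2.1
  have hb0 := (height_eq_zero_one_two_of_krullDim_le_two hα hbc (lt_of_le_not_ge hcd hdc)).1
  simp [hb1] at hb0

end Order

theorem infinite_class_between_general {R : Type*} [CommRing R] [IsNoetherianRing R]
    (hdim : ringKrullDim R = 2)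
    (hfinmax : {I : Ideal R | I.IsMaximal}.Finite)
    (hHfin : {p : PrimeSpectrum R | Order.height p = 0 ∨ (Order.height p = 1 ∧
      ∃ a b : PrimeSpectrum R, Order.height a = 0 ∧ Order.height b = 0 ∧ a ≠ b ∧
        a ≤ p ∧ b ≤ p)}.Finite)
    (q q' q'' : PrimeSpectrum R) (h1 : q'' < q') (h2 : q' < q) :
    {p : PrimeSpectrum R | Order.height p = 1 ∧ q'' < p ∧ p < q ∧
      (∀ w : PrimeSpectrum R, p < w → w = q) ∧
      (∀ w : PrimeSpectrum R, w < p → w = q'')}.Infinite := by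
  open Order in
  have hR : krullDim (PrimeSpectrum R) ≤ 2 := hdim.le
  obtain ⟨hq''0, -, hq2⟩ := height_eq_zero_one_two_of_krullDim_le_two hR h1 h2
  intro hT
  have hmax : {r : PrimeSpectrum R | IsMax r}.Finite := by
    simp_rw [PrimeSpectrum.isMax_iff]
    exact hfinmax.preimage (Function.Injective.injOn fun _ _ ↦ PrimeSpectrum.ext)
  -- the holes are filled by the sets of `hHfin` and `hT`
  set S := {r : PrimeSpectrum R | IsMax r ∧ r ≠ q} ∪ _ ∪ _
  have hS : S.Finite := ((hmax.subset fun _ hr ↦ hr.1).union hHfin).union hT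
  have hqS : ∀ r ∈ S, ¬ q ≤ r := by
    rintro r ((⟨-, hrq⟩ | hrH) | hrT) hqr
    · exact hrq ((isMax_of_lt_of_lt_of_krullDim_le_two hR h1 h2 hqr).antisymm hqr)
    · have := height_mono hqr
      rcases hrH with h | ⟨h, -⟩ <;> simp [h, hq2] at this
    · exact hqr.not_gt hrT.2.2.1
  obtain ⟨x, hxq, hxS⟩ := PrimeSpectrum.exists_mem_forall_notMem_of_finite hS q hqS
  obtain ⟨p, hq''p, hpq, hxp⟩ := PrimeSpectrum.exists_mem_between_of_notMem h1 h2 hxq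
    (hxS q'' (.inl (.inr (.inl hq''0))))
  have hp1 := (height_eq_zero_one_two_of_krullDim_le_two hR hq''p hpq).2.1
  refine hxS p (.inr ⟨hp1, hq''p, hpq, fun w hpw ↦ ?_, fun w hwp ↦ ?_⟩) hxp
  · by_contra hwq
    exact hxS w (.inl (.inl ⟨isMax_of_lt_of_lt_of_krullDim_le_two hR hq''p hpw, hwq⟩))
      (hpw.le hxp)
  · by_contra hwq
    have hw0 := (height_eq_zero_one_two_of_krullDim_le_two hR hwp hpq).1
    exact hxS p (.inl (.inr (.inr ⟨hp1, w, q'', hw0, hq''0, hwq, hwp.le, hq''p.le⟩))) hxp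

/-- Let `R` be a Noetherian ring of dimension 2 with finitely many maximal ideals all of
height 2, in which every height-one prime lies under only finitely many maximal ideals, and
whose set of minimal primes together with height-one primes dominating at least two minimal
primes is finite. Given a chain `q'' < q' < q` of primes, there are infinitely many height-one
primes strictly between `q''` and `q` whose only prime strictly above is `q` and whose only
prime strictly below is `q''`. -/
theorem infinite_class_between {R : Type*} [CommRing R] [IsNoetherianRing R]
    (hdim : ringKrullDim R = 2)
    (hfinmax : {I : Ideal R | I.IsMaximal}.Finite)
    (hmaxht : ∀ (I : Ideal R) (hI : I.IsMaximal),
      Order.height (⟨I, hI.isPrime⟩ : PrimeSpectrum R) = 2)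
    (hfinover : ∀ p : PrimeSpectrum R, Order.height p = 1 →
      {I : Ideal R | I.IsMaximal ∧ p.asIdeal ≤ I}.Finite)
    (hHfin : {p : PrimeSpectrum R | Order.height p = 0 ∨ (Order.height p = 1 ∧
      ∃ a b : PrimeSpectrum R, Order.height a = 0 ∧ Order.height b = 0 ∧ a ≠ b ∧
        a ≤ p ∧ b ≤ p)}.Finite)
    (q q' q'' : PrimeSpectrum R) (h1 : q'' < q') (h2 : q' < q) :
    {p : PrimeSpectrum R | Order.height p = 1 ∧ q'' < p ∧ p < q ∧
      (∀ w : PrimeSpectrum R, p < w → w = q) ∧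
      (∀ w : PrimeSpectrum R, w < p → w = q'')}.Infinite :=
  infinite_class_between_general hdim hfinmax hHfin q q' q'' h1 h2
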